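/- arXiv:2301.06662 — 2 statements merged into one kernel-verified Lean document; each statement's English description precedes it below -/
import Mathlib

section
/- For any real p×(I+1) matrix W supported on a subspace M (i.e., W[ij]=0 outside the support set of cardinality s), the regularizer R(W) = ||w_con||_1 + ν·∑_{i=1}^I ||w_i − w_con||_2 satisfies R(W) ≤ (√s + ν·√(I·p·ω_max(L_m)))·||W||_F, where w_1,...,w_I,w_con are the columns of W, ω_max(L_m) is the largest eigenvalue of the (I+1)×(I+1) matrix L_m having 1's on the first I diagonal entries, I in the last diagonal entry, −1 in the last row and column off-diagonal, and 0 elsewhere. -/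
/-!
Both terms of the regularizer are controlled by Cauchy–Schwarz against the Frobenius norm.
The ℓ¹ norm of the consensus column is at most the square root of its support size (≤ s) times
its ℓ² norm. For the second term, `∑ᵢ (W[ji] - W[j,I+1])²` is the quadratic form of `L_m` at the
`j`-th row, so summing over rows gives `∑ᵢ ‖wᵢ - w_con‖² ≤ ω_max ‖W‖_F²`, and Cauchy–Schwarz over
the `I` columns contributes the factor `√I` (the extra factor `p ≥ 1` only weakens the bound).
-/

open Finset

theorem Finset.sum_le_sqrt_card_mul_sqrt_sum_sq {ι : Type*} (s : Finset ι) (f : ι → ℝ) :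
    ∑ i ∈ s, f i ≤ √(#s : ℝ) * √(∑ i ∈ s, f i ^ 2) := by
  simpa using Real.sum_mul_le_sqrt_mul_sqrt s 1 f

theorem sum_abs_le_sqrt_card_support_mul_sqrt_sum_sq {ι : Type*} [Fintype ι] (f : ι → ℝ) :
    ∑ i, |f i| ≤ √(#{i | f i ≠ 0} : ℝ) * √(∑ i, f i ^ 2) := by
  have hsupp : ∀ g : ι → ℝ, (∀ i, g i = 0 ↔ f i = 0) → ∑ i ∈ {i | f i ≠ 0}, g i = ∑ i, g i :=
    fun g hg => sum_filter_of_ne fun i _ hi => by rwa [Ne, hg] at hi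
  calc ∑ i, |f i| = ∑ i ∈ {i | f i ≠ 0}, |f i| := (hsupp _ fun i => abs_eq_zero).symm
    _ ≤ √(#{i | f i ≠ 0} : ℝ) * √(∑ i ∈ {i | f i ≠ 0}, |f i| ^ 2) :=
      sum_le_sqrt_card_mul_sqrt_sum_sq _ _
    _ = √(#{i | f i ≠ 0} : ℝ) * √(∑ i, f i ^ 2) := by
      simp only [sq_abs, hsupp _ fun i => pow_eq_zero_iff two_ne_zero]

namespace Matrix

variable {m n α : Type*} [Fintype m] [Fintype n]

theorem card_col_support_le [Zero α] [DecidableEq α] (W : Matrix m n α) (k : n) :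
    #{j | W j k ≠ 0} ≤ #{q : m × n | W q.1 q.2 ≠ 0} :=
  card_le_card_of_injOn (fun j => (j, k)) (fun j hj => by simpa using hj)
    fun _ _ _ _ h => congrArg Prod.fst h

theorem sum_col_sq_le_sum_sq (W : Matrix m n ℝ) (k : n) :
    ∑ j, W j k ^ 2 ≤ ∑ j, ∑ i, W j i ^ 2 :=
  sum_le_sum fun j _ => single_le_sum (fun i _ => sq_nonneg (W j i)) (mem_univ k)

end Matrix

/-- The matrix `L_m`. -/
def consensusLaplacian (I : ℕ) : Matrix (Fin (I + 1)) (Fin (I + 1)) ℝ :=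
  Matrix.of fun i j =>
    if i = Fin.last I ∧ j = Fin.last I then (I : ℝ)
    else if i = j then 1
    else if i = Fin.last I ∨ j = Fin.last I then -1 else 0

theorem consensusLaplacian_quadForm (I : ℕ) (v : Fin (I + 1) → ℝ) :
    ∑ a, ∑ b, v a * consensusLaplacian I a b * v b
      = ∑ i : Fin I, (v i.castSucc - v (Fin.last I)) ^ 2 := by
  simp only [Fin.sum_univ_castSucc, consensusLaplacian, Matrix.of_apply, Fin.castSucc_ne_last,
    (Fin.castSucc_ne_last _).symm, Fin.castSucc_inj, false_and, and_false, and_self, or_false,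
    false_or, or_self, if_true, if_false, mul_ite, ite_mul, mul_zero, zero_mul, sum_ite_eq,
    mem_univ]
  simp only [sub_sq, sum_add_distrib, sum_sub_distrib, ← sum_mul, ← mul_sum, sum_const, card_univ,
    Fintype.card_fin, nsmul_eq_mul, mul_one, ← pow_two]
  ring

section RayleighBound

variable {I : ℕ} {ω : ℝ}
  (hω : ∀ v : Fin (I + 1) → ℝ,
    ∑ a, ∑ b, v a * consensusLaplacian I a b * v b ≤ ω * ∑ a, v a ^ 2)
include hω

/-- `L_m` is singular (it kills the constant vector), so any upper Rayleigh bound is `≥ 0`. -/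
theorem nonneg_of_consensusLaplacian_rayleigh_le : 0 ≤ ω := by
  have h := hω fun _ => 1
  rw [consensusLaplacian_quadForm] at h
  simp only [sub_self, one_pow, ne_eq, OfNat.ofNat_ne_zero, not_false_eq_true, zero_pow,
    sum_const_zero, sum_const, card_univ, Fintype.card_fin, nsmul_eq_mul, mul_one] at h
  exact nonneg_of_mul_nonneg_left h (by positivity)

theorem sum_sq_col_sub_last_le_of_consensusLaplacian_rayleigh_le {p : ℕ}
    (W : Matrix (Fin p) (Fin (I + 1)) ℝ) :
    ∑ i : Fin I, ∑ j, (W j i.castSucc - W j (Fin.last I)) ^ 2 ≤ ω * ∑ j, ∑ i, W j i ^ 2 := by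
  rw [sum_comm, mul_sum]
  exact sum_le_sum fun j _ => consensusLaplacian_quadForm I (W j) ▸ hω (W j)

end RayleighBound

/-- bound on the regularizer R(W) = ‖w_con‖₁ + ν ∑ᵢ ‖wᵢ − w_con‖₂
for a matrix W with s nonzero entries, in terms of √s + ν√(I p ω_max(L_m)) times ‖W‖_F. -/
theorem regularizer_bound (p I : ℕ) (ν : ℝ) (hν : 0 < ν)
    (W : Matrix (Fin p) (Fin (I + 1)) ℝ)
    (s : ℕ)
    (hs : s = (Finset.univ.filter
      (fun q : Fin p × Fin (I + 1) => W q.1 q.2 ≠ 0)).card)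
    (Lm : Matrix (Fin (I + 1)) (Fin (I + 1)) ℝ)
    (hLm : ∀ i j : Fin (I + 1), Lm i j =
      if i = Fin.last I ∧ j = Fin.last I then (I : ℝ)
      else if i = j then 1
      else if i = Fin.last I ∨ j = Fin.last I then -1 else 0)
    (ωmax : ℝ)
    -- ω_max(L_m) is the largest eigenvalue of L_m, i.e. it bounds the Rayleigh quotient
    (hω : ∀ v : Fin (I + 1) → ℝ,
      (∑ i, ∑ j, v i * Lm i j * v j) ≤ ωmax * ∑ i, (v i) ^ 2) :
    (∑ j, |W j (Fin.last I)|) +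
      ν * ∑ i : Fin I,
        Real.sqrt (∑ j, (W j i.castSucc - W j (Fin.last I)) ^ 2)
    ≤ (Real.sqrt s + ν * Real.sqrt ((I : ℝ) * p * ωmax)) *
        Real.sqrt (∑ j, ∑ i, (W j i) ^ 2) := by
  obtain rfl | hp := p.eq_zero_or_pos
  · simp
  obtain rfl : Lm = consensusLaplacian I := Matrix.ext hLm
  have hω0 := nonneg_of_consensusLaplacian_rayleigh_le hω
  set S := ∑ j, ∑ i, W j i ^ 2
  have consensus : ∑ j, |W j (Fin.last I)| ≤ √s * √S := by
    refine (sum_abs_le_sqrt_card_support_mul_sqrt_sum_sq _).trans ?_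
    rw [hs]
    gcongr
    · exact_mod_cast W.card_col_support_le _
    · exact W.sum_col_sq_le_sum_sq _
  have deviations : ∑ i : Fin I, √(∑ j, (W j i.castSucc - W j (Fin.last I)) ^ 2)
      ≤ √(I * p * ωmax) * √S :=
    calc _ ≤ √(I : ℝ) * √(∑ i : Fin I, ∑ j, (W j i.castSucc - W j (Fin.last I)) ^ 2) := by
          simpa using Real.sum_sqrt_mul_sqrt_le univ (f := 1) (fun _ => zero_le_one)
            fun (i : Fin I) => sum_nonneg fun j _ => sq_nonneg (W j i.castSucc - W j (Fin.last I))
      _ ≤ √(I : ℝ) * √(p * ωmax * S) := by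
          gcongr
          exact (sum_sq_col_sub_last_le_of_consensusLaplacian_rayleigh_le hω W).trans
            (by gcongr; exact le_mul_of_one_le_left hω0 (by exact_mod_cast hp))
      _ = √(I * p * ωmax) * √S := by
          rw [← Real.sqrt_mul (by positivity), ← Real.sqrt_mul' _ (by positivity)]; ring_nf
  calc _ ≤ √s * √S + ν * (√(I * p * ωmax) * √S) := by gcongr
    _ = _ := by ring
end

section
/- Let R and R* be a norm and its dual norm on ℝ^{p×(I+1)} with respect to the trace inner product, and suppose R is decomposable with respect to orthogonal subspaces (M, M^⊥). Let G be a differentiable function satisfying the curvature bound G(W*+Δ) − G(W*) − ⟨∇G(W*), Δ⟩ ≥ 2β||Δ||_F² for all Δ, and suppose R*(∇G(W*)) ≤ λ/2 with λ > 0. Then for any Δ, the function φ(Δ) = G(W*+Δ) − G(W*) + λ(R(W*+Δ) − R(W*)) satisfies φ(Δ) ≥ −(3λ/2)·R(Δ_M) + 2β·||Δ||_F², provided W* ∈ M so that R(W*+Δ) − R(W*) ≥ R(Δ_{M^⊥}) − R(Δ_M). -/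
open Finset RealInnerProductSpace

/-! The curvature bound controls `G` up to the linear term `⟪∇G(W*), Δ⟫`, which the
generalized Cauchy–Schwarz inequality bounds by `(λ/2) R(Δ) ≤ (λ/2)(R(Δ_M) + R(Δ_{M^⊥}))`.
Since `W* ∈ M`, decomposability gives `R(W* + Δ) - R(W*) ≥ R(Δ_{M^⊥}) - R(Δ_M)`; adding the
two bounds, the `R(Δ_{M^⊥})` terms leave a nonnegative surplus `(λ/2) R(Δ_{M^⊥})`. -/

namespace Seminorm

variable {𝕜 E : Type*} [SeminormedRing 𝕜] [AddCommGroup E] [Module 𝕜 E]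

def IsDecomposable (p : Seminorm 𝕜 E) (A B : Submodule 𝕜 E) : Prop :=
  ∀ x ∈ A, ∀ y ∈ B, p (x + y) = p x + p y

theorem IsDecomposable.sub_le_map_add_sub {p : Seminorm 𝕜 E} {A B : Submodule 𝕜 E}
    (hp : p.IsDecomposable A B) {w a b : E} (hw : w ∈ A) (ha : a ∈ A) (hb : b ∈ B) :
    p b - p a ≤ p (w + (a + b)) - p w := by
  have hsplit : p (w + (a + b)) = p (w + a) + p b := by
    rw [← add_assoc]
    exact hp _ (A.add_mem hw ha) _ hb
  have htri : p w ≤ p (w + a) + p a := by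
    simpa using map_sub_le_add p (w + a) a
  linarith

end Seminorm

theorem neg_le_inner_of_dual_le {E : Type*} [NormedAddCommGroup E] [InnerProductSpace ℝ E]
    (p : Seminorm ℝ E) {q : E → ℝ} (hdual : ∀ Y X, |⟪Y, X⟫| ≤ q Y * p X) {Y : E} {c : ℝ}
    (hY : q Y ≤ c) (X : E) : -(c * p X) ≤ ⟪Y, X⟫ :=
  calc -(c * p X) ≤ -(q Y * p X) := neg_le_neg (mul_le_mul_of_nonneg_right hY (apply_nonneg p X))
    _ ≤ -|⟪Y, X⟫| := neg_le_neg (hdual Y X)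
    _ ≤ ⟪Y, X⟫ := neg_abs_le _

theorem phi_lower_bound_general (p I : ℕ)
    (R Rstar : EuclideanSpace ℝ (Fin p × Fin (I + 1)) → ℝ)
    -- R is a norm
    (hR_add : ∀ x y, R (x + y) ≤ R x + R y)
    (hR_smul : ∀ (c : ℝ) x, R (c • x) = |c| * R x)
    -- R* is the dual norm: generalized Cauchy–Schwarz
    (hdual : ∀ Y X, |⟪Y, X⟫| ≤ Rstar Y * R X)
    (M : Submodule ℝ (EuclideanSpace ℝ (Fin p × Fin (I + 1))))
    -- decomposability with respect to (M, Mᗮ)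
    (hdecomp : ∀ W₁ ∈ M, ∀ W₂ ∈ Mᗮ, R (W₁ + W₂) = R W₁ + R W₂)
    (G : EuclideanSpace ℝ (Fin p × Fin (I + 1)) → ℝ)
    (GW : EuclideanSpace ℝ (Fin p × Fin (I + 1)))  -- GW = ∇G(W*)
    (β lam : ℝ) (hlam : 0 < lam)
    (Wstar : EuclideanSpace ℝ (Fin p × Fin (I + 1))) (hWstar : Wstar ∈ M)
    -- curvature bound for G at W*
    (hcurv : ∀ Δ, 2 * β * ‖Δ‖ ^ 2 ≤ G (Wstar + Δ) - G Wstar - ⟪GW, Δ⟫)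
    (hRstar : Rstar GW ≤ lam / 2) :
    ∀ Δ : EuclideanSpace ℝ (Fin p × Fin (I + 1)),
      -(3 * lam / 2) *
          R ((M.orthogonalProjectionOnto Δ : EuclideanSpace ℝ (Fin p × Fin (I + 1))))
        + 2 * β * ‖Δ‖ ^ 2
      ≤ G (Wstar + Δ) - G Wstar + lam * (R (Wstar + Δ) - R Wstar) := by
  intro Δ
  let Rₛ : Seminorm ℝ _ := Seminorm.of R hR_add fun c x => by rw [hR_smul, Real.norm_eq_abs]
  set a := M.starProjection Δ
  set b := Δ - a
  have hΔ : Δ = a + b := (add_sub_cancel a Δ).symm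
  have hR_split : Rₛ b - Rₛ a ≤ Rₛ (Wstar + Δ) - Rₛ Wstar := by
    rw [hΔ]
    exact Seminorm.IsDecomposable.sub_le_map_add_sub (p := Rₛ) hdecomp hWstar
      (M.starProjection_apply_mem Δ) (M.sub_starProjection_mem_orthogonal Δ)
  have hgrad : -(lam / 2 * Rₛ Δ) ≤ ⟪GW, Δ⟫ := neg_le_inner_of_dual_le Rₛ hdual hRstar Δ
  have hRΔ : Rₛ Δ ≤ Rₛ a + Rₛ b := hΔ ▸ map_add_le_add Rₛ a b
  have hRb : 0 ≤ lam / 2 * Rₛ b := mul_nonneg (half_pos hlam).le (apply_nonneg Rₛ b)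
  change -(3 * lam / 2) * Rₛ a + 2 * β * ‖Δ‖ ^ 2
    ≤ G (Wstar + Δ) - G Wstar + lam * (Rₛ (Wstar + Δ) - Rₛ Wstar)
  linarith [hcurv Δ, mul_le_mul_of_nonneg_left hR_split hlam.le,
    mul_le_mul_of_nonneg_left hRΔ (half_pos hlam).le]

/-- lower bound on φ(Δ) = G(W*+Δ) − G(W*) + λ(R(W*+Δ) − R(W*))
for a decomposable norm R with dual norm R*, curvature 2β and R*(∇G(W*)) ≤ λ/2:
φ(Δ) ≥ −(3λ/2)R(Δ_M) + 2β‖Δ‖_F². -/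
theorem phi_lower_bound (p I : ℕ)
    (R Rstar : EuclideanSpace ℝ (Fin p × Fin (I + 1)) → ℝ)
    -- R is a norm
    (hR_add : ∀ x y, R (x + y) ≤ R x + R y)
    (hR_smul : ∀ (c : ℝ) x, R (c • x) = |c| * R x)
    (hR_nonneg : ∀ x, 0 ≤ R x)
    -- R* is the dual norm: generalized Cauchy–Schwarz
    (hdual : ∀ Y X, |⟪Y, X⟫| ≤ Rstar Y * R X)
    (M : Submodule ℝ (EuclideanSpace ℝ (Fin p × Fin (I + 1))))
    -- decomposability with respect to (M, Mᗮ)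
    (hdecomp : ∀ W₁ ∈ M, ∀ W₂ ∈ Mᗮ, R (W₁ + W₂) = R W₁ + R W₂)
    (G : EuclideanSpace ℝ (Fin p × Fin (I + 1)) → ℝ)
    (GW : EuclideanSpace ℝ (Fin p × Fin (I + 1)))  -- GW = ∇G(W*)
    (β lam : ℝ) (hβ : 0 < β) (hlam : 0 < lam)
    (Wstar : EuclideanSpace ℝ (Fin p × Fin (I + 1))) (hWstar : Wstar ∈ M)
    -- curvature bound for G at W*
    (hcurv : ∀ Δ, 2 * β * ‖Δ‖ ^ 2 ≤ G (Wstar + Δ) - G Wstar - ⟪GW, Δ⟫)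
    (hRstar : Rstar GW ≤ lam / 2) :
    ∀ Δ : EuclideanSpace ℝ (Fin p × Fin (I + 1)),
      -(3 * lam / 2) *
          R ((M.orthogonalProjectionOnto Δ : EuclideanSpace ℝ (Fin p × Fin (I + 1))))
        + 2 * β * ‖Δ‖ ^ 2
      ≤ G (Wstar + Δ) - G Wstar + lam * (R (Wstar + Δ) - R Wstar) :=
  phi_lower_bound_general p I R Rstar hR_add hR_smul hdual M hdecomp G GW β lam hlam Wstar hWstar
    hcurv hRstar
end
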